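/- arXiv:1210.6160 — 5 statements merged into one kernel-verified Lean document; each statement's English description precedes it below -/
import Mathlib

section
/- Let {f_{α,γ}}_{α,γ∈ℤ} ⊆ ℂ[λ,∂] satisfy (βλ - αμ) f_{α+β,γ}(λ+μ, ∂) = f_{β,γ}(μ, ∂+λ) f_{α,β+γ}(λ, ∂) - f_{α,γ}(λ, ∂+μ) f_{β,α+γ}(μ, ∂) for all α,β,γ ∈ ℤ. If f_{1,γ₀} = 0 for some γ₀ ∈ ℤ, then f_{α,γ} = 0 for all α,γ ∈ ℤ with γ ≤ γ₀ and α+γ ≥ γ₀+1. -/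
open MvPolynomial

/-- Substitute the two variables of `f ∈ ℂ[λ,∂]` by elements of `ℂ[λ,μ,∂]`. -/
noncomputable def sub2 (f : MvPolynomial (Fin 2) ℂ) (a b : MvPolynomial (Fin 3) ℂ) :
    MvPolynomial (Fin 3) ℂ :=
  aeval ![a, b] f

/-- The structure coefficient equation of a free intermediate series module over the
Block-type Lie conformal algebra `B`, as an identity in `ℂ[λ,μ,∂]`
(`λ = X 0`, `μ = X 1`, `∂ = X 2`):
`(βλ - αμ) f_{α+β,γ}(λ+μ,∂)
   = f_{β,γ}(μ,∂+λ) f_{α,β+γ}(λ,∂) - f_{α,γ}(λ,∂+μ) f_{β,α+γ}(μ,∂)`. -/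
def StructEq (f : ℤ → ℤ → MvPolynomial (Fin 2) ℂ) : Prop :=
  ∀ α β γ : ℤ,
    (C (β : ℂ) * X 0 - C (α : ℂ) * X 1) * sub2 (f (α + β) γ) (X 0 + X 1) (X 2)
      = sub2 (f β γ) (X 1) (X 2 + X 0) * sub2 (f α (β + γ)) (X 0) (X 2)
        - sub2 (f α γ) (X 0) (X 2 + X 1) * sub2 (f β (α + γ)) (X 1) (X 2)

lemma sub2_zero (a b : MvPolynomial (Fin 3) ℂ) : sub2 0 a b = 0 := by
  simp [sub2]

/-- Setting `μ = 0` undoes the substitution `λ ↦ λ + μ`. -/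
lemma eq_zero_of_sub2_X_add_X_eq_zero {f : MvPolynomial (Fin 2) ℂ}
    (h : sub2 f (X 0 + X 1) (X 2) = 0) : f = 0 := by
  have h' := congrArg (aeval (R := ℂ) ![(X 0 : MvPolynomial (Fin 2) ℂ), 0, X 1]) h
  rw [map_zero, sub2, ← AlgHom.comp_apply, comp_aeval] at h'
  have hX : (fun i => aeval (R := ℂ) ![(X 0 : MvPolynomial (Fin 2) ℂ), 0, X 1]
      (![X 0 + X 1, X 2] i)) = X := by
    funext i
    fin_cases i <;> simp
  rwa [hX, aeval_X_left, AlgHom.id_apply] at h'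

lemma C_mul_X_sub_C_mul_X_ne_zero {a : ℂ} (ha : a ≠ 0) (c : ℂ) :
    (C a * X 0 - C c * X 1 : MvPolynomial (Fin 3) ℂ) ≠ 0 := by
  intro h
  have h' := congrArg (eval ![1, 0, 0]) h
  simp [ha] at h'

/-- The structure equation at `β = 1`, after cancelling the nonzero factor `λ - αμ`. -/
lemma StructEq.eq_zero_of_factors_eq_zero {f : ℤ → ℤ → MvPolynomial (Fin 2) ℂ}
    (hf : StructEq f) {α γ : ℤ} (h₁ : f 1 γ = 0 ∨ f α (1 + γ) = 0)
    (h₂ : f α γ = 0 ∨ f 1 (α + γ) = 0) : f (α + 1) γ = 0 := by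
  have hprod₁ : sub2 (f 1 γ) (X 1) (X 2 + X 0) * sub2 (f α (1 + γ)) (X 0) (X 2) = 0 := by
    rcases h₁ with h | h <;> simp [h, sub2_zero]
  have hprod₂ : sub2 (f α γ) (X 0) (X 2 + X 1) * sub2 (f 1 (α + γ)) (X 1) (X 2) = 0 := by
    rcases h₂ with h | h <;> simp [h, sub2_zero]
  have heq := hf α 1 γ
  rw [hprod₁, hprod₂, sub_zero] at heq
  have hne : (C ((1 : ℤ) : ℂ) * X 0 - C (α : ℂ) * X 1 : MvPolynomial (Fin 3) ℂ) ≠ 0 :=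
    C_mul_X_sub_C_mul_X_ne_zero (by norm_num) _
  exact eq_zero_of_sub2_X_add_X_eq_zero ((mul_eq_zero.mp heq).resolve_left hne)

/-- If `f_{1,γ₀} = 0` for some `γ₀`, then `f_{α,γ} = 0` whenever `γ ≤ γ₀` and
`α + γ ≥ γ₀ + 1`. -/
theorem lemma_pre4_a (f : ℤ → ℤ → MvPolynomial (Fin 2) ℂ) (hf : StructEq f)
    (γ₀ : ℤ) (h0 : f 1 γ₀ = 0) :
    ∀ α γ : ℤ, γ ≤ γ₀ → γ₀ + 1 ≤ α + γ → f α γ = 0 := by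
  intro α γ hγ hαγ
  have hα : 1 ≤ α := by omega
  induction α, hα using Int.leInduction generalizing γ with
  | base =>
    obtain rfl : γ = γ₀ := by omega
    exact h0
  | succ α _ ih =>
    refine hf.eq_zero_of_factors_eq_zero ?_ ?_
    · rcases eq_or_lt_of_le hγ with rfl | hlt
      · exact .inl h0
      · exact .inr (ih (1 + γ) (by omega) (by omega))
    · rcases eq_or_lt_of_le (show γ₀ ≤ α + γ by omega) with h | hlt
      · exact .inr (h ▸ h0)
      · exact .inl (ih γ hγ (by omega))
end

section
/- Let f ∈ ℂ[x,y] be a polynomial satisfying f(μ, ∂+λ)·f(λ, ∂) = f(λ, ∂+μ)·f(μ, ∂) as an identity in ℂ[λ,μ,∂]. Then f does not depend on its second variable, i.e., f(x,y) = h(x) for some h ∈ ℂ[x]. -/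
/-!
Compare degrees in `λ`. On the left, `f(μ, ∂ + λ)` is a translate of `f(μ, λ)`, of `λ`-degree
`deg_y f`, and `f(λ, ∂)` has `λ`-degree `deg_x f`; degrees add since `ℂ[λ,μ,∂]` is a domain.
On the right, `f(λ, ∂ + μ)` has `λ`-degree at most `deg_x f` and `f(μ, ∂)` is free of `λ`.
Hence `deg_y f + deg_x f ≤ deg_x f`.
-/

open MvPolynomial

namespace MvPolynomial

variable {σ τ R : Type*} [CommSemiring R]

theorem degreeOf_aeval_le (p : MvPolynomial σ R) (g : σ → MvPolynomial τ R) (i : τ)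
    (w : σ → ℕ) (hw : ∀ j, degreeOf i (g j) ≤ w j) :
    degreeOf i (aeval g p) ≤ weightedTotalDegree w p := by
  rw [aeval_def, eval₂_eq]
  refine (degreeOf_sum_le _ _ _).trans (Finset.sup_mono_fun fun d _ => ?_)
  calc degreeOf i (algebraMap R _ (coeff d p) * ∏ j ∈ d.support, g j ^ d j)
      ≤ ∑ j ∈ d.support, degreeOf i (g j ^ d j) :=
        (degreeOf_C_mul_le _ _ _).trans (degreeOf_prod_le _ _ _)
    _ ≤ ∑ j ∈ d.support, d j * w j :=
        Finset.sum_le_sum fun j _ => (degreeOf_pow_le _ _ _).trans (Nat.mul_le_mul_left _ (hw j))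
    _ = Finsupp.weight w d := by simp [Finsupp.weight_apply, Finsupp.sum]

theorem degreeOf_aeval_le_degreeOf (p : MvPolynomial σ R) (g : σ → MvPolynomial τ R) {i : τ}
    {j : σ} (hj : degreeOf i (g j) ≤ 1) (hg : ∀ k ≠ j, degreeOf i (g k) = 0) :
    degreeOf i (aeval g p) ≤ degreeOf j p := by
  classical
  refine (degreeOf_aeval_le p g i (Pi.single j 1) fun k => ?_).trans_eq
    (weightedTotalDegree_piSingle j p)
  by_cases hk : k = j
  · simpa [hk] using hj
  · simp [hk, hg k hk]

theorem degreeOf_aeval_eq_zero (p : MvPolynomial σ R) (g : σ → MvPolynomial τ R) {i : τ}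
    (hg : ∀ k, degreeOf i (g k) = 0) : degreeOf i (aeval g p) = 0 :=
  Nat.le_zero.mp <| (degreeOf_aeval_le p g i 0 fun k => (hg k).le).trans <|
    Finset.sup_le fun d _ => by simp [Finsupp.weight_apply]

theorem exists_eq_polynomial_aeval_X_of_degreeOf_eq_zero {p : MvPolynomial σ R} {i : σ}
    (hp : ∀ j ≠ i, degreeOf j p = 0) : ∃ h : Polynomial R, p = Polynomial.aeval (X i) h := by
  obtain ⟨q, rfl⟩ := exists_rename_eq_of_vars_subset_range p (fun _ : Unit => i)
    (fun _ _ _ => rfl) fun j hj => ⟨(), by_contra fun hji => mem_vars_iff_degreeOf_ne_zero.mp hj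
      (hp j (Ne.symm hji))⟩
  refine ⟨uniqueAlgEquiv R Unit q, ?_⟩
  have : (Polynomial.aeval (X i)).comp (uniqueAlgEquiv R Unit).toAlgHom = rename fun _ => i :=
    algHom_ext fun u => by
      change Polynomial.aeval (X i) (eval₂ Polynomial.C _ (X u)) = _
      simp
  exact (AlgHom.congr_fun this q).symm

end MvPolynomial

section sub2

variable (f : MvPolynomial (Fin 2) ℂ)

lemma sub2_X_X (i j : Fin 3) : sub2 f (X i) (X j) = rename ![i, j] f := by
  rw [sub2, rename_eq_aeval]
  congr 2
  funext k
  fin_cases k <;> rfl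

lemma sub2_X_X_ne_zero {i j : Fin 3} (hij : i ≠ j) (hf : f ≠ 0) : sub2 f (X i) (X j) ≠ 0 := by
  rw [sub2_X_X]
  exact (map_ne_zero_iff _ (rename_injective _ (injective_pair_iff_ne.mpr hij))).mpr hf

lemma degreeOf_sub2_X_X {i j : Fin 3} (hij : i ≠ j) :
    degreeOf i (sub2 f (X i) (X j)) = degreeOf 0 f := by
  rw [sub2_X_X]
  exact degreeOf_rename_of_injective (injective_pair_iff_ne.mpr hij) 0

lemma degreeOf_sub2_X_X_of_ne {i j k : Fin 3} (hj : i ≠ j) (hk : i ≠ k) :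
    degreeOf i (sub2 f (X j) (X k)) = 0 :=
  degreeOf_aeval_eq_zero f _ <| Fin.forall_fin_two.mpr
    ⟨degreeOf_X_of_ne hj, degreeOf_X_of_ne hk⟩

lemma degreeOf_sub2_X_le {i : Fin 3} {b : MvPolynomial (Fin 3) ℂ} (hb : degreeOf i b = 0) :
    degreeOf i (sub2 f (X i) b) ≤ degreeOf 0 f :=
  degreeOf_aeval_le_degreeOf f _ (by simp) (Fin.forall_fin_two.mpr ⟨fun h => absurd rfl h,
    fun _ => hb⟩)

lemma rename_eq_aeval_sub2 :
    rename ![(1 : Fin 3), 0] f =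
      aeval ![(X 0 - X 2 : MvPolynomial (Fin 3) ℂ), X 1, X 2] (sub2 f (X 1) (X 2 + X 0)) := by
  rw [sub2, ← AlgHom.comp_apply, comp_aeval, rename_eq_aeval]
  congr 2
  funext j
  fin_cases j <;> simp

lemma sub2_X_X_add_ne_zero (hf : f ≠ 0) : sub2 f (X 1) (X 2 + X 0) ≠ 0 := by
  intro h
  have := rename_eq_aeval_sub2 f
  rw [h, map_zero, map_eq_zero_iff _ (rename_injective _ (by decide))] at this
  exact hf this

-- `f(μ, λ)` is obtained from `f(μ, ∂ + λ)` by `λ ↦ λ - ∂`, which does not raise `λ`-degrees.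
lemma degreeOf_one_le_degreeOf_sub2_X_X_add :
    degreeOf 1 f ≤ degreeOf 0 (sub2 f (X 1) (X 2 + X 0)) :=
  calc degreeOf 1 f = degreeOf 0 (rename ![(1 : Fin 3), 0] f) :=
        (degreeOf_rename_of_injective (by decide) 1).symm
    _ ≤ degreeOf 0 (sub2 f (X 1) (X 2 + X 0)) := by
        rw [rename_eq_aeval_sub2]
        refine degreeOf_aeval_le_degreeOf _ _ ((degreeOf_sub_le _ _ _).trans ?_) fun k hk => ?_
        · simp [degreeOf_X]
        · fin_cases k <;> simp [degreeOf_X] at hk ⊢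

end sub2

/-- If `f ∈ ℂ[x,y]` satisfies `f(μ, ∂+λ) f(λ, ∂) = f(λ, ∂+μ) f(μ, ∂)` in `ℂ[λ,μ,∂]`
(`λ = X 0`, `μ = X 1`, `∂ = X 2`), then `f` does not depend on its second variable:
`f(x,y) = h(x)` for some `h ∈ ℂ[x]`. -/
theorem indep_second_var (f : MvPolynomial (Fin 2) ℂ)
    (hf : sub2 f (X 1) (X 2 + X 0) * sub2 f (X 0) (X 2)
        = sub2 f (X 0) (X 2 + X 1) * sub2 f (X 1) (X 2)) :
    ∃ h : Polynomial ℂ, f = Polynomial.aeval (X 0 : MvPolynomial (Fin 2) ℂ) h := by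
  by_cases hf0 : f = 0
  · exact ⟨0, by simp [hf0]⟩
  refine exists_eq_polynomial_aeval_X_of_degreeOf_eq_zero fun j hj => ?_
  obtain rfl : j = 1 := by omega
  have hdeg : degreeOf 1 f + degreeOf 0 f ≤ degreeOf 0 f + 0 :=
    calc degreeOf 1 f + degreeOf 0 f
        ≤ degreeOf 0 (sub2 f (X 1) (X 2 + X 0)) + degreeOf 0 (sub2 f (X 0) (X 2)) :=
          add_le_add (degreeOf_one_le_degreeOf_sub2_X_X_add f)
            (degreeOf_sub2_X_X f (by decide)).ge
      _ = degreeOf 0 (sub2 f (X 1) (X 2 + X 0) * sub2 f (X 0) (X 2)) :=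
          (degreeOf_mul_eq (sub2_X_X_add_ne_zero f hf0) (sub2_X_X_ne_zero f (by decide) hf0)).symm
      _ = degreeOf 0 (sub2 f (X 0) (X 2 + X 1) * sub2 f (X 1) (X 2)) := by rw [hf]
      _ ≤ degreeOf 0 (sub2 f (X 0) (X 2 + X 1)) + degreeOf 0 (sub2 f (X 1) (X 2)) :=
          degreeOf_mul_le _ _ _
      _ ≤ degreeOf 0 f + 0 :=
          add_le_add (degreeOf_sub2_X_le f (Nat.le_zero.mp ((degreeOf_add_le 0 _ _).trans
            (by simp [degreeOf_X])))) (degreeOf_sub2_X_X_of_ne f (by decide) (by decide)).le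
  omega
end

section
/- Let f ∈ ℂ[λ,∂] be a nonconstant polynomial and h ∈ ℂ[μ] such that αμ·(f(λ+μ,∂) - f(λ,∂)) = h(μ)·(f(λ,∂+μ) - f(λ,∂)) as an identity in ℂ[λ,μ,∂], where α ∈ ℤ, α ≠ 0. Then h(μ) = Cμ for some constant C ∈ ℂ. -/
open MvPolynomial

/-! Write `f = ∑ₖ Bₖ(λ) ∂ᵏ` with `d = deg_∂ f` and read the identity in `ℂ[λ,μ][∂]`.
The coefficients of `∂ᵈ` give `αμ (B_d(λ+μ) - B_d(λ)) = 0`, so `B_d` is a constant `a`;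
as `f` is nonconstant, `d ≥ 1` and `a ≠ 0`. The coefficients of `∂ᵈ⁻¹` then give
`α (B_{d-1}(λ+μ) - B_{d-1}(λ)) = d a h(μ)`, which makes `h` additive, hence linear. -/

namespace Polynomial

variable {R : Type*} [CommRing R]

theorem taylor_coeff_of_natDegree_le {p : R[X]} {n : ℕ} (hp : p.natDegree ≤ n) (r : R) :
    (taylor r p).coeff n = p.coeff n := by
  have : hasseDeriv n p = C (p.coeff n) := by
    ext m
    rw [hasseDeriv_coeff, coeff_C]
    rcases m with _ | m
    · simp
    · simp [coeff_eq_zero_of_natDegree_lt (show p.natDegree < m + 1 + n by omega)]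
  rw [taylor_coeff, this, eval_C]

theorem taylor_coeff_of_natDegree_le_succ {p : R[X]} {n : ℕ} (hp : p.natDegree ≤ n + 1)
    (r : R) : (taylor r p).coeff n = p.coeff n + (n + 1) * r * p.coeff (n + 1) := by
  have : hasseDeriv n p = C (p.coeff n) + C ((n + 1) * p.coeff (n + 1)) * X := by
    ext m
    rw [hasseDeriv_coeff, coeff_add, coeff_C, coeff_C_mul, coeff_X]
    rcases m with _ | _ | m
    · simp
    · simp [add_comm 1 n, Nat.choose_succ_self_right]
    · simp [coeff_eq_zero_of_natDegree_lt (show p.natDegree < m + 2 + n by omega)]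
  rw [taylor_coeff, this]
  simp only [eval_add, eval_C, eval_mul, eval_X]
  ring

theorem eq_C_of_aeval_X_add_eq {S : Type*} [CommSemiring S] {p : S[X]}
    (hp : aeval (MvPolynomial.X 0 + MvPolynomial.X 1 : MvPolynomial (Fin 2) S) p
      = aeval (MvPolynomial.X 0) p) :
    p = C (p.coeff 0) := by
  have := congrArg (MvPolynomial.aeval ![0, (X : S[X])]) hp
  rw [← aeval_algHom_apply, ← aeval_algHom_apply] at this
  simpa [aeval_def, eval₂_at_zero] using this

theorem exists_eq_C_mul_X_of_eval_add {K : Type*} [Field K] [CharZero K] {p : K[X]}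
    (hp : ∀ s t, p.eval (s + t) = p.eval s + p.eval t) : ∃ c, p = C c * X := by
  have hzero : p.eval 0 = 0 := by simpa using hp 0 0
  have hnat : ∀ n : ℕ, p.eval (n : K) = n * p.eval 1 := by
    intro n
    induction n with
    | zero => simpa using hzero
    | succ n ih => push_cast; rw [hp, ih]; ring
  refine ⟨p.eval 1, eq_of_infinite_eval_eq _ _ ?_⟩
  refine Set.infinite_of_injective_forall_mem Nat.cast_injective fun n => ?_
  simp only [Set.mem_ofPred_eq, eval_mul, eval_C, eval_X, hnat, mul_comm]

theorem exists_eq_C_mul_X_of_aeval_sub_eq {K : Type*} [Field K] [CharZero K]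
    {p q : K[X]} {a k : K} (hk : k ≠ 0)
    (H : MvPolynomial.C a
        * (aeval (MvPolynomial.X 0 + MvPolynomial.X 1 : MvPolynomial (Fin 2) K) q
          - aeval (MvPolynomial.X 0) q) = MvPolynomial.C k * aeval (MvPolynomial.X 1) p) :
    ∃ c, p = C c * X := by
  have hpt : ∀ s t, a * (q.eval (s + t) - q.eval s) = k * p.eval t := fun s t => by
    have := congrArg (MvPolynomial.aeval ![s, t]) H
    simp only [map_mul, map_sub, MvPolynomial.aeval_C, ← aeval_algHom_apply] at this
    simpa using this
  refine exists_eq_C_mul_X_of_eval_add fun s t => mul_left_cancel₀ hk ?_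
  have hs := hpt 0 s
  have hst := hpt 0 (s + t)
  rw [zero_add] at hs hst
  linear_combination hs + hpt s t - hst

theorem Bivariate.aeval_C_X_add_C {R A : Type*} [CommSemiring R] [CommSemiring A]
    [Algebra R A] (f : MvPolynomial (Fin 2) R) (c r : A) :
    MvPolynomial.aeval ![C c, X + C r] f
      = taylor r (((equivMvPolynomial R).symm f).map (aeval c).toRingHom) := by
  have : MvPolynomial.aeval ![C c, X + C r]
      = ((taylorAlgHom r).restrictScalars R).comp
          ((mapAlgHom (aeval c)).comp (equivMvPolynomial R).symm.toAlgHom) := by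
    apply MvPolynomial.algHom_ext
    intro i
    fin_cases i <;> simp [equivMvPolynomial]
  rw [this]
  rfl

end Polynomial

namespace MvPolynomial

variable {R : Type*} [CommSemiring R]

noncomputable def polynomialInLastVar :
    MvPolynomial (Fin 3) R →ₐ[R] Polynomial (MvPolynomial (Fin 2) R) :=
  aeval ![Polynomial.C (X 0), Polynomial.C (X 1), Polynomial.X]

@[simp]
theorem polynomialInLastVar_X_zero :
    polynomialInLastVar (X 0 : MvPolynomial (Fin 3) R) = Polynomial.C (X 0) :=
  aeval_X _ _

@[simp]
theorem polynomialInLastVar_X_one :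
    polynomialInLastVar (X 1 : MvPolynomial (Fin 3) R) = Polynomial.C (X 1) :=
  aeval_X _ _

@[simp]
theorem polynomialInLastVar_X_two :
    polynomialInLastVar (X 2 : MvPolynomial (Fin 3) R) = Polynomial.X :=
  aeval_X _ _

end MvPolynomial

open Polynomial.Bivariate

theorem polynomialInLastVar_sub2 (f : MvPolynomial (Fin 2) ℂ) {a b : MvPolynomial (Fin 3) ℂ}
    {c r : MvPolynomial (Fin 2) ℂ} (ha : polynomialInLastVar a = Polynomial.C c)
    (hb : polynomialInLastVar b = Polynomial.X + Polynomial.C r) :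
    polynomialInLastVar (sub2 f a b)
      = Polynomial.taylor r
          (((equivMvPolynomial ℂ).symm f).map (Polynomial.aeval c).toRingHom) := by
  rw [sub2, ← AlgHom.comp_apply, comp_aeval, ← aeval_C_X_add_C, ← ha, ← hb]
  congr 2
  funext i
  fin_cases i <;> rfl

def ShiftEquation (f : MvPolynomial (Fin 2) ℂ) (α : ℤ) (h : Polynomial ℂ) : Prop :=
  C (α : ℂ) * X 1 * (sub2 f (X 0 + X 1) (X 2) - sub2 f (X 0) (X 2))
    = Polynomial.aeval (X 1 : MvPolynomial (Fin 3) ℂ) h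
      * (sub2 f (X 0) (X 2 + X 1) - sub2 f (X 0) (X 2))

namespace ShiftEquation

variable {f : MvPolynomial (Fin 2) ℂ} {α : ℤ} {h : Polynomial ℂ}

-- `(equivMvPolynomial ℂ).symm f` is `f` as a polynomial in `∂` with coefficients in `ℂ[λ]`.
theorem coeff_eq (heq : ShiftEquation f α h) (k : ℕ) :
    (C (α : ℂ) * X 1 : MvPolynomial (Fin 2) ℂ)
        * (Polynomial.aeval (X 0 + X 1) (((equivMvPolynomial ℂ).symm f).coeff k)
          - Polynomial.aeval (X 0) (((equivMvPolynomial ℂ).symm f).coeff k))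
      = Polynomial.aeval (X 1) h * ((Polynomial.taylor (X 1)
          (((equivMvPolynomial ℂ).symm f).map (Polynomial.aeval (X 0)).toRingHom)).coeff k
          - Polynomial.aeval (X 0) (((equivMvPolynomial ℂ).symm f).coeff k)) := by
  set P := (equivMvPolynomial ℂ).symm f
  have himg_shiftFst : polynomialInLastVar (sub2 f (X 0 + X 1) (X 2))
      = P.map (Polynomial.aeval (X 0 + X 1)).toRingHom := by
    simpa using polynomialInLastVar_sub2 f (c := X 0 + X 1) (r := 0) (by simp) (by simp)
  have himg_base :
      polynomialInLastVar (sub2 f (X 0) (X 2)) = P.map (Polynomial.aeval (X 0)).toRingHom := by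
    simpa using polynomialInLastVar_sub2 f (c := X 0) (r := 0) (by simp) (by simp)
  have himg_shiftSnd : polynomialInLastVar (sub2 f (X 0) (X 2 + X 1))
      = Polynomial.taylor (X 1) (P.map (Polynomial.aeval (X 0)).toRingHom) :=
    polynomialInLastVar_sub2 f (by simp) (by simp)
  have himg_h : polynomialInLastVar (Polynomial.aeval (X 1 : MvPolynomial (Fin 3) ℂ) h)
      = Polynomial.C (Polynomial.aeval (X 1) h) := by
    rw [← Polynomial.aeval_algHom_apply, polynomialInLastVar_X_one, ← Polynomial.algebraMap_eq,
      Polynomial.aeval_algebraMap_apply]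
  have himg_αμ : polynomialInLastVar (C (α : ℂ) * X 1 : MvPolynomial (Fin 3) ℂ)
      = Polynomial.C (C (α : ℂ) * X 1) := by
    rw [map_mul, ← algebraMap_eq, AlgHom.commutes, polynomialInLastVar_X_one, Polynomial.C_mul,
      Polynomial.algebraMap_apply, algebraMap_eq]
  have := congrArg (fun p => (polynomialInLastVar p).coeff k) heq
  rw [map_mul polynomialInLastVar (C (α : ℂ) * X 1), himg_αμ,
    map_mul polynomialInLastVar (Polynomial.aeval _ h), himg_h, map_sub, map_sub, himg_shiftFst,
    himg_base, himg_shiftSnd, Polynomial.coeff_C_mul,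
    Polynomial.coeff_C_mul] at this
  simpa using this

theorem coeff_natDegree_eq_C (hα : α ≠ 0) (heq : ShiftEquation f α h) :
    ∃ a, ((equivMvPolynomial ℂ).symm f).coeff ((equivMvPolynomial ℂ).symm f).natDegree
      = Polynomial.C a := by
  set P := (equivMvPolynomial ℂ).symm f
  have hαμ : (C (α : ℂ) * X 1 : MvPolynomial (Fin 2) ℂ) ≠ 0 :=
    mul_ne_zero (by simpa using hα) (X_ne_zero 1)
  have htop := heq.coeff_eq P.natDegree
  rw [Polynomial.taylor_coeff_of_natDegree_le Polynomial.natDegree_map_le, Polynomial.coeff_map,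
    AlgHom.toRingHom_eq_coe, RingHom.coe_coe, sub_self, mul_zero] at htop
  exact ⟨_, Polynomial.eq_C_of_aeval_X_add_eq <| sub_eq_zero.mp <|
    (mul_eq_zero.mp htop).resolve_left hαμ⟩

theorem natDegree_ne_zero (hnc : ¬ ∃ c : ℂ, f = C c) (hα : α ≠ 0)
    (heq : ShiftEquation f α h) :
    ((equivMvPolynomial ℂ).symm f).natDegree ≠ 0 := by
  intro h0
  obtain ⟨a, ha⟩ := heq.coeff_natDegree_eq_C hα
  rw [h0] at ha
  refine hnc ⟨a, ?_⟩
  rw [← (equivMvPolynomial ℂ).apply_symm_apply f, Polynomial.eq_C_of_natDegree_eq_zero h0, ha,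
    equivMvPolynomial_C_C]

theorem aeval_sub_eq (heq : ShiftEquation f α h) {e : ℕ} {a : ℂ}
    (he : ((equivMvPolynomial ℂ).symm f).natDegree = e + 1)
    (ha : ((equivMvPolynomial ℂ).symm f).coeff (e + 1) = Polynomial.C a) :
    (C (α : ℂ) : MvPolynomial (Fin 2) ℂ)
        * (Polynomial.aeval (X 0 + X 1) (((equivMvPolynomial ℂ).symm f).coeff e)
          - Polynomial.aeval (X 0) (((equivMvPolynomial ℂ).symm f).coeff e))
      = C ((e + 1) * a) * Polynomial.aeval (X 1) h := by
  have hc := heq.coeff_eq e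
  rw [Polynomial.taylor_coeff_of_natDegree_le_succ (Polynomial.natDegree_map_le.trans he.le),
    Polynomial.coeff_map, Polynomial.coeff_map, ha] at hc
  simp only [AlgHom.toRingHom_eq_coe, RingHom.coe_coe, Polynomial.aeval_C, algebraMap_eq] at hc
  refine mul_left_cancel₀ (X_ne_zero 1 : (X 1 : MvPolynomial (Fin 2) ℂ) ≠ 0) ?_
  simp only [map_mul, map_add, map_natCast, map_one]
  linear_combination hc

end ShiftEquation

/-- If `f ∈ ℂ[λ,∂]` is nonconstant, `α` is a nonzero integer, `h ∈ ℂ[μ]`, and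
`αμ (f(λ+μ,∂) - f(λ,∂)) = h(μ) (f(λ,∂+μ) - f(λ,∂))` holds in `ℂ[λ,μ,∂]`
(`λ = X 0`, `μ = X 1`, `∂ = X 2`), then `h(μ) = Cμ` for some constant `C ∈ ℂ`. -/
theorem h_is_linear (f : MvPolynomial (Fin 2) ℂ) (hnc : ¬ ∃ c : ℂ, f = C c)
    (α : ℤ) (hα : α ≠ 0) (h : Polynomial ℂ)
    (heq : C (α : ℂ) * X 1 * (sub2 f (X 0 + X 1) (X 2) - sub2 f (X 0) (X 2))
        = Polynomial.aeval (X 1 : MvPolynomial (Fin 3) ℂ) h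
          * (sub2 f (X 0) (X 2 + X 1) - sub2 f (X 0) (X 2))) :
    ∃ c : ℂ, h = Polynomial.C c * Polynomial.X := by
  have heq : ShiftEquation f α h := heq
  obtain ⟨e, he⟩ := Nat.exists_eq_succ_of_ne_zero (heq.natDegree_ne_zero hnc hα)
  obtain ⟨a, ha⟩ := heq.coeff_natDegree_eq_C hα
  rw [he] at ha
  have ha0 : a ≠ 0 := by
    rintro rfl
    rw [Polynomial.C_0, ← he] at ha
    simp [Polynomial.leadingCoeff_eq_zero.mp ha] at he
  exact Polynomial.exists_eq_C_mul_X_of_aeval_sub_eq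
    (mul_ne_zero (Nat.cast_add_one_ne_zero e) ha0) (heq.aeval_sub_eq he ha)
end

section
/- Let f ∈ ℂ[λ,∂], α a nonzero integer, and c ∈ ℂ, such that α·(f(λ+μ,∂) - f(λ,∂)) = c·(f(λ,∂+μ) - f(λ,∂)) holds identically in ℂ[λ,μ,∂] (after canceling a factor of μ). Then there exists a single-variable polynomial F ∈ ℂ[s] with f(λ,∂) = F(cλ + α∂). -/
/-!
Differentiating the identity in `μ` and setting `μ = 0` gives the transport equation
`α ∂_λ f = c ∂_∂ f`. After the invertible linear substitution `λ = t`, `∂ = (s - c t) / α`,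
the polynomial `g(s, t) = f(t, (s - c t) / α)` satisfies `∂_t g = 0`, so in characteristic zero
it is a polynomial `F(s)`; undoing the substitution, `f(λ, ∂) = F(cλ + α∂)`.
-/

open MvPolynomial

namespace MvPolynomial

theorem pderiv_aeval {R σ τ : Type*} [CommSemiring R] [Fintype σ] (g : σ → MvPolynomial τ R)
    (i : τ) (f : MvPolynomial σ R) :
    pderiv i (aeval g f) = ∑ j, aeval g (pderiv j f) * pderiv i (g j) := by
  classical
  induction f using MvPolynomial.induction_on with
  | C r => simp
  | add p q hp hq => simp only [map_add, hp, hq, add_mul, Finset.sum_add_distrib]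
  | mul_X p k hp =>
    rw [map_mul, aeval_X, pderiv_mul, hp]
    simp only [pderiv_mul, pderiv_X, map_add, map_mul, aeval_X, add_mul, Finset.sum_add_distrib,
      Finset.sum_mul, mul_assoc, mul_comm (g k)]
    simp [Pi.single_apply, add_comm]

theorem pderiv_aeval_fin_two {R τ : Type*} [CommSemiring R] (a b : MvPolynomial τ R) (i : τ)
    (f : MvPolynomial (Fin 2) R) :
    pderiv i (aeval ![a, b] f)
      = aeval ![a, b] (pderiv 0 f) * pderiv i a + aeval ![a, b] (pderiv 1 f) * pderiv i b := by
  rw [pderiv_aeval, Fin.sum_univ_two]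
  rfl

theorem map_aeval_fin_two {R τ A : Type*} [CommSemiring R] [CommSemiring A] [Algebra R A]
    (φ : MvPolynomial τ R →ₐ[R] A) (a b : MvPolynomial τ R) (f : MvPolynomial (Fin 2) R) :
    φ (aeval ![a, b] f) = aeval ![φ a, φ b] f := by
  have : (fun i => φ (![a, b] i)) = ![φ a, φ b] := by
    funext i
    fin_cases i <;> rfl
  rw [comp_aeval_apply, this]

theorem aeval_X_zero_X_one {R : Type*} [CommSemiring R] (p : MvPolynomial (Fin 2) R) :
    aeval ![X 0, X 1] p = p := by
  rw [show ![(X 0 : MvPolynomial (Fin 2) R), X 1] = X by ext i; fin_cases i <;> rfl,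
    aeval_X_left_apply]

theorem notMem_vars_of_pderiv_eq_zero {R σ : Type*} [CommSemiring R] [NoZeroDivisors R]
    [CharZero R] {i : σ} {p : MvPolynomial σ R} (h : pderiv i p = 0) : i ∉ p.vars := by
  classical
  rw [mem_vars_iff_mem_support]
  rintro ⟨m, hm, hi⟩
  have hle : Finsupp.single i 1 ≤ m := by
    rw [Finsupp.single_le_iff]; exact Nat.one_le_iff_ne_zero.mpr (Finsupp.mem_support_iff.mp hi)
  have := coeff_pderiv (i := i) p (m - Finsupp.single i 1)
  rw [h, coeff_zero, tsub_add_cancel_of_le hle, eq_comm, mul_eq_zero] at this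
  exact this.elim (mem_support_iff.mp hm) (Nat.cast_add_one_ne_zero _)

theorem exists_eq_aeval_X_zero_of_pderiv_one_eq_zero {R : Type*} [CommSemiring R]
    [NoZeroDivisors R] [CharZero R] {p : MvPolynomial (Fin 2) R} (h : pderiv 1 p = 0) :
    ∃ F : Polynomial R, p = Polynomial.aeval (X 0) F := by
  have hp : p ∈ supported R {0} := by
    rw [mem_supported]
    intro j hj
    have : j ≠ 1 := fun hj1 => notMem_vars_of_pderiv_eq_zero h (hj1 ▸ hj)
    fin_cases j <;> simp_all
  rw [supported_eq_adjoin_X, Set.image_singleton, Algebra.adjoin_singleton_eq_range_aeval] at hp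
  obtain ⟨F, hF⟩ := hp
  exact ⟨F, hF.symm⟩

theorem exists_eq_aeval_of_C_mul_pderiv_eq {K : Type*} [Field K] [CharZero K] {a c : K}
    (ha : a ≠ 0) {f : MvPolynomial (Fin 2) K} (h : C a * pderiv 0 f = C c * pderiv 1 f) :
    ∃ F : Polynomial K, f = Polynomial.aeval (C c * X 0 + C a * X 1) F := by
  have hinv : C a⁻¹ * C a = (1 : MvPolynomial (Fin 2) K) := by
    rw [← C_mul, inv_mul_cancel₀ ha, C_1]
  -- `v` substitutes `(X 0, X 1) := (t, (s - c t) / a)` in the variables `(s, t) = (X 0, X 1)`;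
  -- `w` is the inverse substitution.
  set v : Fin 2 → MvPolynomial (Fin 2) K := ![X 1, C a⁻¹ * (X 0 - C c * X 1)]
  set w : Fin 2 → MvPolynomial (Fin 2) K := ![C c * X 0 + C a * X 1, X 0]
  have hv := congrArg (aeval v) h
  simp only [map_mul, aeval_C, algebraMap_eq] at hv
  have hg : pderiv 1 (aeval v f) = 0 := by
    simp only [v, pderiv_aeval_fin_two, pderiv_C_mul, map_sub, pderiv_X_self, pderiv_X_of_ne,
      ne_eq, Fin.zero_eq_one_iff, OfNat.ofNat_ne_one, not_false_eq_true, mul_one, zero_sub]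
    linear_combination C a⁻¹ * hv - aeval v (pderiv 0 f) * hinv
  obtain ⟨F, hF⟩ := exists_eq_aeval_X_zero_of_pderiv_one_eq_zero hg
  have hwv : (fun i => aeval w (v i)) = ![X 0, X 1] := by
    refine _root_.funext (Fin.forall_fin_two.2 ⟨by simp [v, w], ?_⟩)
    simp only [v, w, Matrix.cons_val_one, Matrix.cons_val_zero, map_mul, map_sub, aeval_X,
      aeval_C, algebraMap_eq]
    linear_combination X 1 * hinv
  refine ⟨F, ?_⟩
  calc f = aeval w (aeval v f) := by rw [comp_aeval_apply, hwv, aeval_X_zero_X_one]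
    _ = _ := by rw [hF, ← Polynomial.aeval_algHom_apply]; simp [w]

end MvPolynomial

theorem C_mul_pderiv_eq_of_sub2 {a c : ℂ} {f : MvPolynomial (Fin 2) ℂ}
    (h : C a * (sub2 f (X 0 + X 1) (X 2) - sub2 f (X 0) (X 2))
      = C c * (sub2 f (X 0) (X 2 + X 1) - sub2 f (X 0) (X 2))) :
    C a * pderiv 0 f = C c * pderiv 1 f := by
  have hμ := congrArg (pderiv 1) h
  simp only [sub2, pderiv_C_mul, map_sub, pderiv_aeval_fin_two, map_add, pderiv_X_self,
    pderiv_X_of_ne, ne_eq, Fin.reduceEq, not_false_eq_true, mul_zero, mul_one, add_zero, zero_add,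
    sub_zero] at hμ
  have h0 := congrArg (aeval (![X 0, 0, X 1] : Fin 3 → MvPolynomial (Fin 2) ℂ)) hμ
  simpa only [map_mul, aeval_C, algebraMap_eq, map_aeval_fin_two, map_add, aeval_X,
    Matrix.cons_val, add_zero, aeval_X_zero_X_one] using h0

/-- If `f ∈ ℂ[λ,∂]`, `α` is a nonzero integer, `c ∈ ℂ`, and
`α (f(λ+μ,∂) - f(λ,∂)) = c (f(λ,∂+μ) - f(λ,∂))` holds in `ℂ[λ,μ,∂]`
(`λ = X 0`, `μ = X 1`, `∂ = X 2`), then `f(λ,∂) = F(cλ + α∂)` for some one-variable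
polynomial `F ∈ ℂ[s]`. -/
theorem pde_solution (f : MvPolynomial (Fin 2) ℂ) (α : ℤ) (hα : α ≠ 0) (c : ℂ)
    (heq : C (α : ℂ) * (sub2 f (X 0 + X 1) (X 2) - sub2 f (X 0) (X 2))
        = C c * (sub2 f (X 0) (X 2 + X 1) - sub2 f (X 0) (X 2))) :
    ∃ F : Polynomial ℂ,
      f = Polynomial.aeval (C c * X 0 + C (α : ℂ) * X 1 : MvPolynomial (Fin 2) ℂ) F :=
  exists_eq_aeval_of_C_mul_pderiv_eq (Int.cast_ne_zero.mpr hα) (C_mul_pderiv_eq_of_sub2 heq)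
end

section
/- Let C, D ∈ ℂ. Define f_{α,γ}(λ,∂) = (α+γ+C)λ + α(∂+D) for α,γ ∈ ℤ. Then these polynomials satisfy the structure coefficient equation (βλ - αμ) f_{α+β,γ}(λ+μ, ∂) = f_{β,γ}(μ, ∂+λ) f_{α,β+γ}(λ, ∂) - f_{α,γ}(λ, ∂+μ) f_{β,α+γ}(μ, ∂) for all α,β,γ ∈ ℤ. (Hence V_{C,D} is a conformal B-module.) -/
open MvPolynomial

theorem sub2_C_mul_X_zero_add_C_mul (a b d : ℂ) (p q : MvPolynomial (Fin 3) ℂ) :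
    sub2 (C a * X 0 + C b * (X 1 + C d)) p q = C a * p + C b * (q + C d) := by
  simp [sub2, MvPolynomial.algebraMap_eq]

/-- The structure coefficients `f_{α,γ}(λ,∂) = (α+γ+C)λ + α(∂+D)` of `V_{C,D}` satisfy
the structure coefficient equation; hence `V_{C,D}` is a conformal `B`-module. -/
theorem VCD_is_module (Cc D : ℂ) :
    StructEq (fun α γ =>
      C ((α : ℂ) + (γ : ℂ) + Cc) * X 0 + C (α : ℂ) * (X 1 + C D)) := by
  intro α β γ
  simp only [sub2_C_mul_X_zero_add_C_mul]
  simp only [Int.cast_add, C_add]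
  ring
end
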